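/- Let λ and μ be partitions of the same size n, of lengths p and q respectively, with m = min{p,q}. Let B = (b_{i,j}) be a matrix of nonnegative integers with row sums λ and column sums μ, and let (P,Q) be the pair of semistandard tableaux associated to B under the RSK correspondence. Then P = C(μ) if and only if: (i) b_{i,j} = 0 whenever i + j > p + 1, and (ii) for all j ∈ [m−1] and all i with 2 ≤ i ≤ p+1−j, the inequality Σ_{k=i}^{p+1−j} b_{k,j} ≥ Σ_{k=i−1}^{p−j} b_{k,j+1} holds. -/

import Mathlib

/-!
Row insertion only performs Knuth moves on reading words, so the reading word of `P` is Knuth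
equivalent to the word `w` of `B` (the bottom line of its two-line array). Knuth moves preserve
the reverse lattice property, and a tableau whose reading word is reverse lattice is canonical.
Hence `P = C(μ)` exactly when `w` is reverse lattice.

Reading `w` row by row of `B`, the binding suffixes are those starting at a block of `j + 2`s,
which gives `∑_{k ≥ i} b_{k,j+1} ≤ ∑_{k > i} b_{k,j}` (0-indexed). Chaining these down to
column `0` forces `b_{i,j} = 0` for `i + j ≥ p`, which is condition (i); given (i), they are
exactly the inequalities (ii), reindexed.
-/

namespace KronRSK

/-- Column bumping: insert `x` into a strictly increasing column (read top to
bottom), displacing the topmost entry `≥ x`; returns the new column and the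
bumped entry (if any). -/
def bumpCol (x : ℕ) : List ℕ → List ℕ × Option ℕ
  | [] => ([x], none)
  | a :: l => if x ≤ a then (x :: l, some a) else
      let p := bumpCol x l; (a :: p.1, p.2)

/-- Column insertion of `x` into a tableau represented as its list of columns
(left to right). -/
def colInsert (x : ℕ) : List (List ℕ) → List (List ℕ)
  | [] => [[x]]
  | c :: rest =>
    match bumpCol x c with
    | (c', none) => c' :: rest
    | (c', some y) => c' :: colInsert y rest

/-- `P(w) = w₁ → ( ⋯ → (w_l → ∅) ⋯ )`: the tableau obtained by successively
column-inserting the letters of `w` into the empty tableau. -/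
def Pcol (w : List ℕ) : List (List ℕ) :=
  w.foldr (fun x T => colInsert x T) []

/-- Row bumping: insert `x` into a weakly increasing row, displacing the leftmost
entry `> x`. -/
def bumpRow (x : ℕ) : List ℕ → List ℕ × Option ℕ
  | [] => ([x], none)
  | a :: l => if x < a then (x :: l, some a) else
      let p := bumpRow x l; (a :: p.1, p.2)

/-- Row insertion of `x` into a tableau represented as its list of rows
(top to bottom). -/
def rowInsert (x : ℕ) : List (List ℕ) → List (List ℕ)
  | [] => [[x]]
  | row :: rest =>
    match bumpRow x row with
    | (row', none) => row' :: rest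
    | (row', some y) => row' :: rowInsert y rest

/-- `P(w) = (⋯(∅ ← w₁) ← ⋯ ) ← w_l`: the insertion tableau of `w` by row insertion. -/
def Prow (w : List ℕ) : List (List ℕ) :=
  w.foldl (fun T x => rowInsert x T) []

/-- The canonical tableau `C(λ)` of shape and content `λ` (length `p`),
as a list of columns: column `j` is `1, 2, …, λ'_j`. -/
def canoCols (lam : ℕ → ℕ) (p : ℕ) : List (List ℕ) :=
  (List.range (lam 0)).map (fun j => ((List.range p).filter (fun i => j < lam i)).map (· + 1))

/-- The canonical tableau `C(λ)` of shape and content `λ` (length `p`),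
as a list of rows: row `i` consists of `λ_i` copies of `i`. -/
def canoRows (lam : ℕ → ℕ) (p : ℕ) : List (List ℕ) :=
  (List.range p).map (fun i => List.replicate (lam i) (i + 1))

/-- `w` is a reverse lattice word: every suffix contains at least as many `i`s
as `(i+1)`s, for every `i ≥ 1`. -/
def RevLattice (w : List ℕ) : Prop :=
  ∀ k i, ((w.drop k).count (i + 2)) ≤ (w.drop k).count (i + 1)

/-- The bottom row of the two-line lexicographic array of the `p × q` matrix `B`:
for each row `i` (in order) and each column `j` (in order), the letter `j+1`
repeated `B i j` times. -/
def wordOf (B : ℕ → ℕ → ℕ) (p q : ℕ) : List ℕ :=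
  (List.range p).flatMap (fun i => (List.range q).flatMap (fun j => List.replicate (B i j) (j + 1)))

/-- The RSK insertion tableau `P` of the matrix `B`. -/
def PTab (B : ℕ → ℕ → ℕ) (p q : ℕ) : List (List ℕ) :=
  Prow (wordOf B p q)

/-- The RSK recording tableau `Q` of the matrix `B` (by the symmetry theorem for
RSK, it is the insertion tableau of the transposed matrix). -/
def QTab (B : ℕ → ℕ → ℕ) (p q : ℕ) : List (List ℕ) :=
  PTab (fun i j => B j i) q p

/-- 1-indexed access to the entries of the matrix `B` (0-indexed). -/
def b1 (B : ℕ → ℕ → ℕ) (i j : ℕ) : ℕ := B (i - 1) (j - 1)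

theorem revLattice_nil : RevLattice [] := by
  simp [RevLattice]

theorem revLattice_cons_iff {a : ℕ} {w : List ℕ} :
    RevLattice (a :: w) ↔
      RevLattice w ∧ ∀ i, (a :: w).count (i + 2) ≤ (a :: w).count (i + 1) := by
  refine ⟨fun h => ⟨fun k => h (k + 1), h 0⟩, fun ⟨hw, ha⟩ k => ?_⟩
  cases k with
  | zero => exact ha
  | succ k => exact hw k

theorem RevLattice.count_le {w : List ℕ} (h : RevLattice w) (i : ℕ) :
    w.count (i + 2) ≤ w.count (i + 1) :=
  h 0 i

theorem RevLattice.of_suffix {s w : List ℕ} (h : RevLattice w) (hs : s <:+ w) :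
    RevLattice s := by
  rw [List.suffix_iff_eq_drop] at hs
  intro k i
  rw [hs, List.drop_drop]
  exact h _ i

theorem revLattice_append_congr (u : List ℕ) {w w' : List ℕ}
    (hcount : ∀ a, w.count a = w'.count a) (h : RevLattice w ↔ RevLattice w') :
    RevLattice (u ++ w) ↔ RevLattice (u ++ w') := by
  induction u with
  | nil => exact h
  | cons a u ih => simp only [List.cons_append, revLattice_cons_iff, List.count_cons,
      List.count_append, hcount, ih]

theorem revLattice_replicate_one_append (m : ℕ) (w : List ℕ) :
    RevLattice (List.replicate m 1 ++ w) ↔ RevLattice w := by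
  induction m with
  | zero => rfl
  | succ m ih =>
    rw [List.replicate_succ, List.cons_append, revLattice_cons_iff, ih]
    refine ⟨And.left, fun hw => ⟨hw, fun i => ?_⟩⟩
    have := hw.count_le i
    simp only [List.count_cons, List.count_append, List.count_replicate, beq_iff_eq]
    split_ifs <;> omega

theorem revLattice_replicate_append (m ℓ : ℕ) (w : List ℕ) :
    RevLattice (List.replicate m (ℓ + 2) ++ w) ↔
      RevLattice w ∧ m + w.count (ℓ + 2) ≤ w.count (ℓ + 1) := by
  induction m with
  | zero => simpa using fun hw => hw.count_le ℓ
  | succ m ih =>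
    rw [List.replicate_succ, List.cons_append, revLattice_cons_iff, ih]
    simp only [List.count_cons, List.count_append, List.count_replicate, beq_iff_eq]
    constructor
    · rintro ⟨⟨hw, -⟩, h⟩
      have := h ℓ
      simp only [if_true, if_neg (show ℓ + 2 ≠ ℓ + 1 by omega)] at this
      exact ⟨hw, by omega⟩
    · rintro ⟨hw, h⟩
      refine ⟨⟨hw, by omega⟩, fun i => ?_⟩
      rcases eq_or_ne i ℓ with rfl | hi
      · simp only [if_true, if_neg (show i + 2 ≠ i + 1 by omega)]
        omega
      · have := hw.count_le i
        split_ifs <;> omega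

theorem revLattice_swap_right {x y z : ℕ} (v : List ℕ) (hxy : x < y) (hyz : y ≤ z) :
    RevLattice (y :: z :: x :: v) ↔ RevLattice (y :: x :: z :: v) := by
  simp only [revLattice_cons_iff, List.count_cons, beq_iff_eq]
  constructor <;> rintro ⟨⟨⟨hv, h₁⟩, h₂⟩, h₃⟩ <;>
    refine ⟨⟨⟨hv, fun i => ?_⟩, fun i => ?_⟩, fun i => ?_⟩ <;>
    have := hv.count_le i <;> have := h₁ i <;> have := h₂ i <;> have := h₃ i <;>
    clear h₁ h₂ h₃ hv <;> split_ifs at * <;> omega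

theorem revLattice_swap_left {x y z : ℕ} (v : List ℕ) (hxy : x ≤ y) (hyz : y < z) :
    RevLattice (x :: z :: y :: v) ↔ RevLattice (z :: x :: y :: v) := by
  simp only [revLattice_cons_iff, List.count_cons, beq_iff_eq]
  constructor <;> rintro ⟨⟨⟨hv, h₁⟩, h₂⟩, h₃⟩ <;>
    refine ⟨⟨⟨hv, fun i => ?_⟩, fun i => ?_⟩, fun i => ?_⟩ <;>
    have := hv.count_le i <;> have := h₁ i <;> have := h₂ i <;> have := h₃ i <;>
    clear h₁ h₂ h₃ hv <;> split_ifs at * <;> omega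

inductive KnuthEquiv : List ℕ → List ℕ → Prop
  | swap_right (u v : List ℕ) {x y z : ℕ} (hxy : x < y) (hyz : y ≤ z) :
      KnuthEquiv (u ++ y :: z :: x :: v) (u ++ y :: x :: z :: v)
  | swap_left (u v : List ℕ) {x y z : ℕ} (hxy : x ≤ y) (hyz : y < z) :
      KnuthEquiv (u ++ x :: z :: y :: v) (u ++ z :: x :: y :: v)
  | refl (w : List ℕ) : KnuthEquiv w w
  | symm {w w' : List ℕ} : KnuthEquiv w w' → KnuthEquiv w' w
  | trans {w₁ w₂ w₃ : List ℕ} : KnuthEquiv w₁ w₂ → KnuthEquiv w₂ w₃ → KnuthEquiv w₁ w₃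

namespace KnuthEquiv

theorem append_left {w w' : List ℕ} (l : List ℕ) (h : KnuthEquiv w w') :
    KnuthEquiv (l ++ w) (l ++ w') := by
  induction h with
  | swap_right u v hxy hyz => simpa using swap_right (l ++ u) v hxy hyz
  | swap_left u v hxy hyz => simpa using swap_left (l ++ u) v hxy hyz
  | refl w => exact refl _
  | symm _ ih => exact ih.symm
  | trans _ _ ih₁ ih₂ => exact ih₁.trans ih₂

theorem append_right {w w' : List ℕ} (r : List ℕ) (h : KnuthEquiv w w') :
    KnuthEquiv (w ++ r) (w' ++ r) := by
  induction h with
  | swap_right u v hxy hyz => simpa using swap_right u (v ++ r) hxy hyz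
  | swap_left u v hxy hyz => simpa using swap_left u (v ++ r) hxy hyz
  | refl w => exact refl _
  | symm _ ih => exact ih.symm
  | trans _ _ ih₁ ih₂ => exact ih₁.trans ih₂

theorem count_eq {w w' : List ℕ} (h : KnuthEquiv w w') (a : ℕ) : w.count a = w'.count a := by
  induction h with
  | swap_right | swap_left => simp only [List.count_append, List.count_cons]; omega
  | refl w => rfl
  | symm _ ih => exact ih.symm
  | trans _ _ ih₁ ih₂ => exact ih₁.trans ih₂

theorem revLattice_iff {w w' : List ℕ} (h : KnuthEquiv w w') : RevLattice w ↔ RevLattice w' := by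
  induction h with
  | swap_right u v hxy hyz =>
    exact revLattice_append_congr u (fun a => by simp only [List.count_cons]; omega)
      (revLattice_swap_right v hxy hyz)
  | swap_left u v hxy hyz =>
    exact revLattice_append_congr u (fun a => by simp only [List.count_cons]; omega)
      (revLattice_swap_left v hxy hyz)
  | refl w => exact Iff.rfl
  | symm _ ih => exact ih.symm
  | trans _ _ ih₁ ih₂ => exact ih₁.trans ih₂

end KnuthEquiv

theorem bumpRow_cons_of_lt {x a : ℕ} (t : List ℕ) (h : x < a) :
    bumpRow x (a :: t) = (x :: t, some a) := by
  simp [bumpRow, h]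

theorem bumpRow_cons_of_le {x a : ℕ} (t : List ℕ) (h : a ≤ x) :
    bumpRow x (a :: t) = (a :: (bumpRow x t).1, (bumpRow x t).2) := by
  simp [bumpRow, not_lt.mpr h]

theorem bumpRow_fst_of_snd_eq_none {x : ℕ} :
    ∀ {r : List ℕ}, (bumpRow x r).2 = none → (bumpRow x r).1 = r ++ [x]
  | [], _ => rfl
  | a :: t, h => by
    rcases lt_or_ge x a with hxa | hax
    · simp [bumpRow_cons_of_lt t hxa] at h
    · rw [bumpRow_cons_of_le t hax] at h ⊢
      simpa using bumpRow_fst_of_snd_eq_none h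

theorem lt_of_bumpRow_snd_eq_some {x y : ℕ} :
    ∀ {r : List ℕ}, (bumpRow x r).2 = some y → x < y
  | [], h => by simp [bumpRow] at h
  | a :: t, h => by
    rcases lt_or_ge x a with hxa | hax
    · rw [bumpRow_cons_of_lt t hxa, Option.some.injEq] at h
      exact h ▸ hxa
    · rw [bumpRow_cons_of_le t hax] at h
      exact lt_of_bumpRow_snd_eq_some h

theorem mem_bumpRow_fst {x a : ℕ} : ∀ {r : List ℕ}, a ∈ (bumpRow x r).1 → a = x ∨ a ∈ r
  | [], h => by simpa [bumpRow] using h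
  | b :: t, h => by
    rcases lt_or_ge x b with hxb | hbx
    · rw [bumpRow_cons_of_lt t hxb, List.mem_cons] at h
      exact h.imp_right (List.mem_cons_of_mem _)
    · rw [bumpRow_cons_of_le t hbx, List.mem_cons] at h
      rcases h with rfl | h
      · exact Or.inr List.mem_cons_self
      · exact (mem_bumpRow_fst h).imp_right (List.mem_cons_of_mem _)

theorem bumpRow_fst_ne_nil (x : ℕ) : ∀ r : List ℕ, (bumpRow x r).1 ≠ []
  | [] => List.cons_ne_nil _ _
  | a :: t => by
    rcases lt_or_ge x a with hxa | hax
    · simp [bumpRow_cons_of_lt t hxa]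
    · simp [bumpRow_cons_of_le t hax]

theorem exists_bumpRow_fst_eq_cons (x a : ℕ) (t : List ℕ) :
    ∃ t', (bumpRow x (a :: t)).1 = min x a :: t' := by
  rcases lt_or_ge x a with hxa | hax
  · exact ⟨t, by rw [bumpRow_cons_of_lt t hxa, min_eq_left hxa.le]⟩
  · exact ⟨_, by rw [bumpRow_cons_of_le t hax, min_eq_right hax]⟩

theorem pairwise_bumpRow_fst (x : ℕ) :
    ∀ {r : List ℕ}, r.Pairwise (· ≤ ·) → (bumpRow x r).1.Pairwise (· ≤ ·)
  | [], _ => by simp [bumpRow]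
  | a :: t, hr => by
    rw [List.pairwise_cons] at hr
    rcases lt_or_ge x a with hxa | hax
    · rw [bumpRow_cons_of_lt t hxa]
      exact List.pairwise_cons.mpr ⟨fun b hb => (hxa.trans_le (hr.1 b hb)).le, hr.2⟩
    · rw [bumpRow_cons_of_le t hax]
      refine List.pairwise_cons.mpr ⟨fun b hb => ?_, pairwise_bumpRow_fst x hr.2⟩
      rcases mem_bumpRow_fst hb with rfl | hb
      exacts [hax, hr.1 b hb]

theorem knuthEquiv_append_singleton_of_lt {x a : ℕ} :
    ∀ {t : List ℕ}, t.Pairwise (· ≤ ·) → x < a → (∀ b ∈ t, a ≤ b) →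
      KnuthEquiv (a :: (t ++ [x])) (a :: x :: t)
  | [], _, _, _ => KnuthEquiv.refl _
  | b :: t, ht, hxa, hat => by
    rw [List.pairwise_cons] at ht
    have hab : a ≤ b := hat b List.mem_cons_self
    have hb : KnuthEquiv (b :: (t ++ [x])) (b :: x :: t) :=
      knuthEquiv_append_singleton_of_lt ht.2 (hxa.trans_le hab) ht.1
    exact (hb.append_left [a]).trans (KnuthEquiv.swap_right [] t hxa hab)

theorem knuthEquiv_bumpRow {x y : ℕ} :
    ∀ {r : List ℕ}, r.Pairwise (· ≤ ·) → (bumpRow x r).2 = some y →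
      KnuthEquiv (r ++ [x]) (y :: (bumpRow x r).1)
  | [], _, h => by simp [bumpRow] at h
  | a :: t, hr, h => by
    rw [List.pairwise_cons] at hr
    rcases lt_or_ge x a with hxa | hax
    · rw [bumpRow_cons_of_lt t hxa, Option.some.injEq] at h
      subst h
      rw [bumpRow_cons_of_lt t hxa]
      exact knuthEquiv_append_singleton_of_lt hr.2 hxa hr.1
    · rw [bumpRow_cons_of_le t hax] at h ⊢
      have hbump : KnuthEquiv (a :: (t ++ [x])) (a :: y :: (bumpRow x t).1) :=
        (knuthEquiv_bumpRow hr.2 h).append_left [a]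
      cases t with
      | nil => simp [bumpRow] at h
      | cons b t =>
        obtain ⟨t', ht'⟩ := exists_bumpRow_fst_eq_cons x b t
        rw [ht'] at hbump ⊢
        have hac : a ≤ min x b := le_min hax (hr.1 b List.mem_cons_self)
        have hcy : min x b < y := (min_le_left x b).trans_lt (lt_of_bumpRow_snd_eq_some h)
        exact hbump.trans (KnuthEquiv.swap_left [] t' hac hcy)

theorem rowInsert_cons_of_none {x : ℕ} {r : List ℕ} (T : List (List ℕ))
    (h : (bumpRow x r).2 = none) : rowInsert x (r :: T) = (bumpRow x r).1 :: T := by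
  rw [rowInsert]
  rcases hb : bumpRow x r with ⟨r', _ | _⟩ <;> simp_all

theorem rowInsert_cons_of_some {x y : ℕ} {r : List ℕ} (T : List (List ℕ))
    (h : (bumpRow x r).2 = some y) :
    rowInsert x (r :: T) = (bumpRow x r).1 :: rowInsert y T := by
  rw [rowInsert]
  rcases hb : bumpRow x r with ⟨r', _ | _⟩ <;> simp_all

/-- A weakening of column strictness that row insertion preserves. -/
def SortedRowsFrom : ℕ → List (List ℕ) → Prop
  | _, [] => True
  | k, r :: T => (r ≠ [] ∧ r.Pairwise (· ≤ ·) ∧ ∀ a ∈ r, k ≤ a) ∧ SortedRowsFrom (k + 1) T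

theorem SortedRowsFrom.getElem {k : ℕ} :
    ∀ {T : List (List ℕ)}, SortedRowsFrom k T → ∀ i (hi : i < T.length),
      T[i] ≠ [] ∧ T[i].Pairwise (· ≤ ·) ∧ ∀ a ∈ T[i], k + i ≤ a
  | [], _, i, hi => absurd hi (Nat.not_lt_zero i)
  | r :: T, ⟨hr, hT⟩, 0, _ => hr
  | r :: T, ⟨_, hT⟩, i + 1, hi => by
    simpa only [List.getElem_cons_succ, Nat.add_right_comm k 1 i, Nat.add_assoc]
      using hT.getElem i (Nat.lt_of_succ_lt_succ hi)

theorem SortedRowsFrom.rowInsert {k x : ℕ} (hx : k ≤ x) :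
    ∀ {T : List (List ℕ)}, SortedRowsFrom k T → SortedRowsFrom k (rowInsert x T)
  | [], _ => by simp [KronRSK.rowInsert, SortedRowsFrom, hx]
  | r :: T, ⟨⟨_, hsort, hge⟩, hT⟩ => by
    have hrow : (bumpRow x r).1 ≠ [] ∧ (bumpRow x r).1.Pairwise (· ≤ ·) ∧
        ∀ a ∈ (bumpRow x r).1, k ≤ a := by
      refine ⟨bumpRow_fst_ne_nil x r, pairwise_bumpRow_fst x hsort, fun a ha => ?_⟩
      rcases mem_bumpRow_fst ha with rfl | ha
      exacts [hx, hge a ha]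
    rcases hb : (bumpRow x r).2 with _ | y
    · rw [rowInsert_cons_of_none T hb]
      exact ⟨hrow, hT⟩
    · rw [rowInsert_cons_of_some T hb]
      exact ⟨hrow, hT.rowInsert (by have := lt_of_bumpRow_snd_eq_some hb; omega)⟩

def readingWord (T : List (List ℕ)) : List ℕ := T.reverse.flatten

@[simp]
theorem readingWord_cons (r : List ℕ) (T : List (List ℕ)) :
    readingWord (r :: T) = readingWord T ++ r := by
  simp [readingWord]

theorem knuthEquiv_readingWord_rowInsert (x : ℕ) :
    ∀ {k : ℕ} {T : List (List ℕ)}, SortedRowsFrom k T →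
      KnuthEquiv (readingWord (rowInsert x T)) (readingWord T ++ [x])
  | _, [], _ => KnuthEquiv.refl _
  | _, r :: T, ⟨⟨_, hsort, _⟩, hT⟩ => by
    rcases hb : (bumpRow x r).2 with _ | y
    · rw [rowInsert_cons_of_none T hb, readingWord_cons, readingWord_cons,
        bumpRow_fst_of_snd_eq_none hb, List.append_assoc]
      exact KnuthEquiv.refl _
    · rw [rowInsert_cons_of_some T hb, readingWord_cons, readingWord_cons, List.append_assoc]
      have hrest := (knuthEquiv_readingWord_rowInsert y hT).append_right (bumpRow x r).1
      have hrow := (knuthEquiv_bumpRow hsort hb).symm.append_left (readingWord T)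
      simp only [List.append_assoc, List.singleton_append] at hrest
      exact hrest.trans hrow

theorem Prow_append_singleton (w : List ℕ) (x : ℕ) : Prow (w ++ [x]) = rowInsert x (Prow w) := by
  simp [Prow, List.foldl_append]

theorem sortedRowsFrom_Prow {k : ℕ} {w : List ℕ} (hw : ∀ a ∈ w, k ≤ a) :
    SortedRowsFrom k (Prow w) := by
  induction w using List.reverseRecOn with
  | nil => trivial
  | append_singleton w x ih =>
    simp only [List.mem_append, List.mem_singleton] at hw
    rw [Prow_append_singleton]
    exact (ih fun a ha => hw a (Or.inl ha)).rowInsert (hw x (Or.inr rfl))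

theorem knuthEquiv_readingWord_Prow (w : List ℕ) : KnuthEquiv (readingWord (Prow w)) w := by
  induction w using List.reverseRecOn with
  | nil => exact KnuthEquiv.refl _
  | append_singleton w x ih =>
    rw [Prow_append_singleton]
    exact (knuthEquiv_readingWord_rowInsert x (sortedRowsFrom_Prow (k := 0) (by simp))).trans
      (ih.append_right [x])

theorem mem_readingWord {a : ℕ} {T : List (List ℕ)} : a ∈ readingWord T ↔ ∃ r ∈ T, a ∈ r := by
  simp [readingWord, List.mem_flatten]

theorem exists_of_mem_readingWord_take {a i : ℕ} {T : List (List ℕ)}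
    (h : a ∈ readingWord (T.take i)) : ∃ j, ∃ hj : j < T.length, j < i ∧ a ∈ T[j] := by
  obtain ⟨r, hr, ha⟩ := mem_readingWord.mp h
  obtain ⟨j, hj, rfl⟩ := List.mem_take_iff_getElem.mp hr
  exact ⟨j, by omega, by omega, ha⟩

theorem exists_of_mem_readingWord_drop {a i : ℕ} {T : List (List ℕ)}
    (h : a ∈ readingWord (T.drop i)) : ∃ j, ∃ hj : j < T.length, i ≤ j ∧ a ∈ T[j] := by
  obtain ⟨r, hr, ha⟩ := mem_readingWord.mp h
  obtain ⟨j, hj, rfl⟩ := List.mem_drop_iff_getElem.mp hr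
  exact ⟨i + j, hj.trans_eq' (by omega), by omega, ha⟩

theorem readingWord_eq_drop_append_getElem_append_take (T : List (List ℕ)) {i : ℕ}
    (hi : i < T.length) :
    readingWord T = readingWord (T.drop (i + 1)) ++ T[i] ++ readingWord (T.take i) := by
  have hT : T = T.take i ++ T[i] :: T.drop (i + 1) := by simp
  conv_lhs => rw [hT]
  simp only [readingWord, List.reverse_append, List.reverse_cons, List.flatten_append,
    List.flatten_cons, List.flatten_nil, List.append_nil, List.append_assoc]

/-- Otherwise the last entry `L ≥ i + 2` of row `i`, followed by the rows above it (whose letters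
are `≤ i`), is a suffix of the reading word with an `L` but no `L - 1`. -/
theorem eq_succ_of_mem_of_revLattice {T : List (List ℕ)} (hT : SortedRowsFrom 1 T)
    (hlat : RevLattice (readingWord T)) (i : ℕ) (hi : i < T.length) : ∀ a ∈ T[i], a = i + 1 := by
  induction i using Nat.strong_induction_on with
  | _ i ih =>
    obtain ⟨hne, hsort, hge⟩ := hT.getElem i hi
    have hlast : T[i].getLast hne ≤ i + 1 := by
      by_contra! hlt
      have hsuf : T[i].getLast hne :: readingWord (T.take i) <:+ readingWord T := by
        rw [readingWord_eq_drop_append_getElem_append_take T hi]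
        nth_rw 2 [← List.dropLast_append_getLast hne]
        exact ⟨readingWord (T.drop (i + 1)) ++ T[i].dropLast, by simp⟩
      generalize T[i].getLast hne = L at hsuf hlt
      have habsent : ∀ b, i < b → b ∉ readingWord (T.take i) := fun b hb h => by
        obtain ⟨j, hj, hji, hbj⟩ := exists_of_mem_readingWord_take h
        have := ih j hji hj b hbj
        omega
      have hcount := (hlat.of_suffix hsuf).count_le (L - 2)
      rw [List.count_cons, List.count_cons, List.count_eq_zero.mpr (habsent _ (by omega)),
        List.count_eq_zero.mpr (habsent _ (by omega))] at hcount
      simp only [beq_iff_eq] at hcount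
      split_ifs at hcount <;> omega
    intro a ha
    have := hge a ha
    have := hsort.rel_getLast ha
    omega

theorem count_succ_readingWord {T : List (List ℕ)}
    (hT : ∀ i (hi : i < T.length), ∀ a ∈ T[i], a = i + 1) (i : ℕ) :
    (readingWord T).count (i + 1) = (T.getD i []).length := by
  by_cases hi : i < T.length
  · rw [readingWord_eq_drop_append_getElem_append_take T hi, List.count_append, List.count_append,
      List.getD_eq_getElem _ _ hi, List.count_eq_length.mpr fun b hb => (hT i hi b hb).symm]
    have hbelow : (readingWord (T.drop (i + 1))).count (i + 1) = 0 :=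
      List.count_eq_zero.mpr fun h => by
        obtain ⟨j, hj, hij, haj⟩ := exists_of_mem_readingWord_drop h
        have := hT j hj _ haj
        omega
    have habove : (readingWord (T.take i)).count (i + 1) = 0 :=
      List.count_eq_zero.mpr fun h => by
        obtain ⟨j, hj, hji, haj⟩ := exists_of_mem_readingWord_take h
        have := hT j hj _ haj
        omega
    rw [hbelow, habove, zero_add, add_zero]
  · rw [List.getD_eq_default _ _ (not_lt.mp hi), List.length_nil, List.count_eq_zero]
    intro h
    obtain ⟨r, hr, har⟩ := mem_readingWord.mp h
    obtain ⟨j, hj, rfl⟩ := List.getElem_of_mem hr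
    have := hT j hj _ har
    omega

@[simp]
theorem length_canoRows (mu : ℕ → ℕ) (q : ℕ) : (canoRows mu q).length = q := by
  simp [canoRows]

@[simp]
theorem getElem_canoRows (mu : ℕ → ℕ) (q i : ℕ) (hi : i < (canoRows mu q).length) :
    (canoRows mu q)[i] = List.replicate (mu i) (i + 1) := by
  simp [canoRows]

theorem count_succ_readingWord_canoRows (mu : ℕ → ℕ) (q i : ℕ) :
    (readingWord (canoRows mu q)).count (i + 1) = if i < q then mu i else 0 := by
  rw [count_succ_readingWord fun j hj a ha => by
    rw [getElem_canoRows] at ha; exact List.eq_of_mem_replicate ha]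
  split_ifs with hi
  · rw [List.getD_eq_getElem _ _ (by simpa), getElem_canoRows, List.length_replicate]
  · rw [List.getD_eq_default _ _ (by simpa using hi), List.length_nil]

theorem readingWord_canoRows_succ (mu : ℕ → ℕ) (q : ℕ) :
    readingWord (canoRows mu (q + 1)) =
      List.replicate (mu q) (q + 1) ++ readingWord (canoRows mu q) := by
  simp [canoRows, readingWord, List.range_succ]

theorem revLattice_readingWord_canoRows {mu : ℕ → ℕ} (hmu : Antitone mu) (q : ℕ) :
    RevLattice (readingWord (canoRows mu q)) := by
  induction q with
  | zero => exact revLattice_nil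
  | succ q ih =>
    rw [readingWord_canoRows_succ]
    rcases q with _ | j
    · exact (revLattice_replicate_one_append _ _).mpr ih
    · refine (revLattice_replicate_append _ _ _).mpr ⟨ih, ?_⟩
      rw [count_succ_readingWord_canoRows, count_succ_readingWord_canoRows, if_neg (by omega),
        if_pos (by omega)]
      exact hmu (Nat.le_succ j)

theorem Prow_eq_canoRows_iff {mu : ℕ → ℕ} {q : ℕ} {w : List ℕ} (hmu : Antitone mu)
    (hlen : (∀ j, j < q → 0 < mu j) ∧ ∀ j, q ≤ j → mu j = 0) (hpos : ∀ a ∈ w, 1 ≤ a)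
    (hcount : ∀ j, w.count (j + 1) = mu j) :
    Prow w = canoRows mu q ↔ RevLattice w := by
  have hknuth := knuthEquiv_readingWord_Prow w
  constructor
  · intro h
    rw [h] at hknuth
    exact hknuth.revLattice_iff.mp (revLattice_readingWord_canoRows hmu q)
  · intro hw
    have hT : SortedRowsFrom 1 (Prow w) := sortedRowsFrom_Prow hpos
    have hrows := eq_succ_of_mem_of_revLattice hT (hknuth.revLattice_iff.mpr hw)
    have hrowlen : ∀ i, ((Prow w).getD i []).length = mu i := fun i => by
      rw [← count_succ_readingWord hrows, hknuth.count_eq, hcount]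
    have hTlen : (Prow w).length = q := by
      rcases lt_trichotomy (Prow w).length q with h | h | h
      · have := hrowlen (Prow w).length
        rw [List.getD_eq_default _ _ le_rfl, List.length_nil] at this
        exact absurd this (hlen.1 _ h).ne
      · exact h
      · have := hrowlen q
        rw [List.getD_eq_getElem _ _ h, hlen.2 q le_rfl, List.length_eq_zero_iff] at this
        exact absurd this (hT.getElem q h).1
    refine List.ext_getElem (by simp [hTlen]) fun i hi _ => ?_
    rw [getElem_canoRows, List.eq_replicate_iff]
    exact ⟨List.getD_eq_getElem _ [] hi ▸ hrowlen i, hrows i hi⟩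

def rowWord (c : ℕ → ℕ) (q : ℕ) : List ℕ :=
  (List.range q).flatMap fun j => List.replicate (c j) (j + 1)

theorem rowWord_succ (c : ℕ → ℕ) (q : ℕ) :
    rowWord c (q + 1) = rowWord c q ++ List.replicate (c q) (q + 1) := by
  simp [rowWord, List.range_succ]

theorem wordOf_succ (B : ℕ → ℕ → ℕ) (p q : ℕ) :
    wordOf B (p + 1) q = rowWord (B 0) q ++ wordOf (fun i => B (i + 1)) p q := by
  simp only [wordOf, rowWord, List.range_succ_eq_map, List.flatMap_cons, List.flatMap_map]

theorem pos_of_mem_wordOf {B : ℕ → ℕ → ℕ} {p q a : ℕ} (h : a ∈ wordOf B p q) : 1 ≤ a := by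
  simp only [wordOf, List.mem_flatMap, List.mem_replicate] at h
  omega

theorem count_succ_rowWord (c : ℕ → ℕ) (q j : ℕ) :
    (rowWord c q).count (j + 1) = if j < q then c j else 0 := by
  induction q with
  | zero => simp [rowWord]
  | succ q ih =>
    rw [rowWord_succ, List.count_append, ih, List.count_replicate]
    simp only [beq_iff_eq, Nat.add_right_cancel_iff]
    split_ifs <;> first | omega | (subst_vars; omega)

theorem count_succ_wordOf (B : ℕ → ℕ → ℕ) (p q j : ℕ) :
    (wordOf B p q).count (j + 1) = if j < q then ∑ i ∈ Finset.range p, B i j else 0 := by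
  induction p generalizing B with
  | zero => simp [wordOf]
  | succ p ih =>
    rw [wordOf_succ, List.count_append, ih, count_succ_rowWord, Finset.sum_range_succ']
    split_ifs <;> omega

theorem revLattice_rowWord_append (c : ℕ → ℕ) (q : ℕ) (w : List ℕ) :
    RevLattice (rowWord c q ++ w) ↔
      RevLattice w ∧ ∀ j, j + 1 < q → c (j + 1) + w.count (j + 2) ≤ w.count (j + 1) := by
  induction q generalizing w with
  | zero => simp [rowWord]
  | succ q ih =>
    have hcount : ∀ ℓ ≤ q, (List.replicate (c q) (q + 1) ++ w).count ℓ = w.count ℓ := fun ℓ hℓ => by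
      rw [List.count_append, List.count_replicate, if_neg (by simp; omega), zero_add]
    rw [rowWord_succ, List.append_assoc, ih]
    rcases q with _ | q
    · simp [revLattice_replicate_one_append]
    · rw [revLattice_replicate_append]
      constructor
      · rintro ⟨⟨hw, hlast⟩, hrest⟩
        refine ⟨hw, fun j hj => ?_⟩
        rcases Nat.lt_succ_iff_lt_or_eq.mp (Nat.lt_of_succ_lt_succ hj) with hj | rfl
        · simpa only [hcount (j + 2) (by omega), hcount (j + 1) (by omega)] using hrest j (by omega)
        · exact hlast
      · rintro ⟨hw, h⟩
        refine ⟨⟨hw, h q (by omega)⟩, fun j hj => ?_⟩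
        simpa only [hcount (j + 2) (by omega), hcount (j + 1) (by omega)] using h j (by omega)

def TailSumsLattice (B : ℕ → ℕ → ℕ) (p q : ℕ) : Prop :=
  ∀ j, j + 1 < q → ∀ i, ∑ k ∈ Finset.Ico i p, B k (j + 1) ≤ ∑ k ∈ Finset.Ico (i + 1) p, B k j

theorem revLattice_wordOf_iff (q : ℕ) : ∀ (p : ℕ) (B : ℕ → ℕ → ℕ),
    RevLattice (wordOf B p q) ↔ TailSumsLattice B p q
  | 0, B => by simp [wordOf, revLattice_nil, TailSumsLattice]
  | p + 1, B => by
    have hshift : ∀ c i,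
        ∑ k ∈ Finset.Ico i p, B (k + 1) c = ∑ k ∈ Finset.Ico (i + 1) (p + 1), B k c :=
      fun c i => Finset.sum_Ico_add' (fun k => B k c) i p 1
    have hcount : ∀ c, c < q → (wordOf (fun i => B (i + 1)) p q).count (c + 1) =
        ∑ k ∈ Finset.Ico 1 (p + 1), B k c := fun c hc => by
      rw [count_succ_wordOf, if_pos hc, Finset.range_eq_Ico, hshift]
    have htop : ∀ c, ∑ k ∈ Finset.Ico 0 (p + 1), B k c =
        B 0 c + ∑ k ∈ Finset.Ico 1 (p + 1), B k c :=
      fun c => Finset.sum_eq_sum_Ico_succ_bot (Nat.succ_pos p) _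
    rw [wordOf_succ, revLattice_rowWord_append, revLattice_wordOf_iff q p]
    simp only [TailSumsLattice, hshift]
    constructor
    · rintro ⟨hrest, hrow⟩ j hj (_ | i)
      · have := hrow j hj
        rw [hcount _ hj, hcount _ (by omega)] at this
        rw [htop]
        omega
      · exact hrest j hj i
    · intro h
      refine ⟨fun j hj i => h j hj (i + 1), fun j hj => ?_⟩
      have := h j hj 0
      rw [htop] at this
      rw [hcount _ hj, hcount _ (by omega)]
      omega

section TailSums

variable {p q : ℕ} {B : ℕ → ℕ → ℕ}

theorem TailSumsLattice.sum_Ico_le_sum_Ico_zero (hlat : TailSumsLattice B p q) :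
    ∀ j, j < q → ∀ i, ∑ k ∈ Finset.Ico i p, B k j ≤ ∑ k ∈ Finset.Ico (i + j) p, B k 0
  | 0, _, i => le_rfl
  | j + 1, hj, i =>
    calc ∑ k ∈ Finset.Ico i p, B k (j + 1)
        ≤ ∑ k ∈ Finset.Ico (i + 1) p, B k j := hlat j hj i
      _ ≤ ∑ k ∈ Finset.Ico (i + 1 + j) p, B k 0 :=
          hlat.sum_Ico_le_sum_Ico_zero j (by omega) (i + 1)
      _ = ∑ k ∈ Finset.Ico (i + (j + 1)) p, B k 0 := by rw [Nat.add_right_comm, Nat.add_assoc]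

theorem TailSumsLattice.eq_zero (hlat : TailSumsLattice B p q)
    (hsupp : ∀ i j, p ≤ i ∨ q ≤ j → B i j = 0) (i j : ℕ) (hij : p ≤ i + j) : B i j = 0 := by
  by_cases hbox : i < p ∧ j < q
  · have hle := Finset.single_le_sum (f := fun k => B k j) (fun _ _ => Nat.zero_le _)
      (Finset.mem_Ico.mpr ⟨le_rfl, hbox.1⟩)
    have hchain := hlat.sum_Ico_le_sum_Ico_zero j hbox.2 i
    rw [Finset.Ico_eq_empty_of_le hij, Finset.sum_empty] at hchain
    exact Nat.eq_zero_of_le_zero (hle.trans hchain)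
  · exact hsupp i j (by omega)

theorem sum_Icc_b1_eq_sum_Ico (hvan : ∀ i j, p ≤ i + j → B i j = 0) {a b c : ℕ} (ha : 1 ≤ a)
    (hc : 1 ≤ c) (hbc : b + c = p + 1) :
    ∑ k ∈ Finset.Icc a b, b1 B k c = ∑ k ∈ Finset.Ico (a - 1) p, B k (c - 1) := by
  have hshift : ∑ k ∈ Finset.Icc a b, b1 B k c = ∑ k ∈ Finset.Ico (a - 1) b, B k (c - 1) := by
    rw [← Finset.Ico_add_one_right_eq_Icc, ← Nat.sub_add_cancel ha,
      ← Finset.sum_Ico_add' (fun k => b1 B k c)]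
    simp [b1]
  rw [hshift]
  refine Finset.sum_subset (Finset.Ico_subset_Ico_right (by omega)) fun k hk hkb => ?_
  simp only [Finset.mem_Ico] at hk hkb
  exact hvan k (c - 1) (by omega)

theorem tailSumsLattice_iff (hsupp : ∀ i j, p ≤ i ∨ q ≤ j → B i j = 0) :
    TailSumsLattice B p q ↔
      ((∀ i j, 1 ≤ i → i ≤ p → 1 ≤ j → j ≤ q → p + 1 < i + j → b1 B i j = 0) ∧
       (∀ j i, 1 ≤ j → j + 1 ≤ min p q → 2 ≤ i → i ≤ p + 1 - j →
         ∑ k ∈ Finset.Icc (i - 1) (p - j), b1 B k (j + 1) ≤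
         ∑ k ∈ Finset.Icc i (p + 1 - j), b1 B k j)) := by
  constructor
  · intro hlat
    have hvan := hlat.eq_zero hsupp
    refine ⟨fun i j hi _ hj _ hij => hvan _ _ (by omega), fun j i hj hjpq hi hip => ?_⟩
    obtain ⟨j, rfl⟩ : ∃ j', j = j' + 1 := ⟨j - 1, by omega⟩
    obtain ⟨i, rfl⟩ : ∃ i', i = i' + 2 := ⟨i - 2, by omega⟩
    rw [sum_Icc_b1_eq_sum_Ico hvan (by omega) (by omega) (by omega),
      sum_Icc_b1_eq_sum_Ico hvan (by omega) (by omega) (by omega)]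
    simpa using hlat j (by omega) i
  · rintro ⟨hvanish, hineq⟩ j hj i
    have hvan : ∀ i j, p ≤ i + j → B i j = 0 := fun i j hij => by
      by_cases hbox : i < p ∧ j < q
      · exact hvanish (i + 1) (j + 1) (by omega) (by omega) (by omega) (by omega) (by omega)
      · exact hsupp i j (by omega)
    by_cases hij : p ≤ i + j + 1
    · rw [Finset.sum_eq_zero fun k hk => hvan k (j + 1) (by simp at hk; omega)]
      exact Nat.zero_le _
    · have := hineq (j + 1) (i + 2) (by omega) (by omega) (by omega) (by omega)
      rw [sum_Icc_b1_eq_sum_Ico hvan (by omega) (by omega) (by omega),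
        sum_Icc_b1_eq_sum_Ico hvan (by omega) (by omega) (by omega)] at this
      simpa using this

end TailSums

theorem P_eq_cano_iff_general (p q : ℕ) (mu : ℕ → ℕ) (B : ℕ → ℕ → ℕ)
    (hmudec : ∀ i j, i ≤ j → mu j ≤ mu i)
    (hmulen : (∀ j, j < q → 0 < mu j) ∧ ∀ j, q ≤ j → mu j = 0)
    (hsupp : ∀ i j, p ≤ i ∨ q ≤ j → B i j = 0)
    (hcol : ∀ j, ∑ i ∈ Finset.range p, B i j = mu j) :
    PTab B p q = canoRows mu q ↔
      ((∀ i j, 1 ≤ i → i ≤ p → 1 ≤ j → j ≤ q → p + 1 < i + j → b1 B i j = 0) ∧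
       (∀ j i, 1 ≤ j → j + 1 ≤ min p q → 2 ≤ i → i ≤ p + 1 - j →
         ∑ k ∈ Finset.Icc (i - 1) (p - j), b1 B k (j + 1) ≤
         ∑ k ∈ Finset.Icc i (p + 1 - j), b1 B k j)) := by
  have hcount : ∀ j, (wordOf B p q).count (j + 1) = mu j := fun j => by
    rw [count_succ_wordOf]
    split_ifs with hj
    · exact hcol j
    · exact (hmulen.2 j (not_lt.mp hj)).symm
  rw [PTab, Prow_eq_canoRows_iff hmudec hmulen (fun _ => pos_of_mem_wordOf) hcount,
    revLattice_wordOf_iff, tailSumsLattice_iff hsupp]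

/-- Main Lemma, part 1: for a nonnegative integer matrix `B` with
row sums `λ` (length `p`) and column sums `μ` (length `q`), the RSK insertion
tableau `P` of `B` equals `C(μ)` iff the stated vanishing and column conditions
hold (all indices 1-indexed, `m = min p q`). -/
theorem P_eq_cano_iff (n p q : ℕ) (lam mu : ℕ → ℕ) (B : ℕ → ℕ → ℕ)
    (hlamdec : ∀ i j, i ≤ j → lam j ≤ lam i)
    (hlamlen : (∀ i, i < p → 0 < lam i) ∧ ∀ i, p ≤ i → lam i = 0)
    (hmudec : ∀ i j, i ≤ j → mu j ≤ mu i)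
    (hmulen : (∀ j, j < q → 0 < mu j) ∧ ∀ j, q ≤ j → mu j = 0)
    (hlamsize : ∑ i ∈ Finset.range p, lam i = n)
    (hmusize : ∑ j ∈ Finset.range q, mu j = n)
    (hsupp : ∀ i j, p ≤ i ∨ q ≤ j → B i j = 0)
    (hrow : ∀ i, ∑ j ∈ Finset.range q, B i j = lam i)
    (hcol : ∀ j, ∑ i ∈ Finset.range p, B i j = mu j) :
    PTab B p q = canoRows mu q ↔
      ((∀ i j, 1 ≤ i → i ≤ p → 1 ≤ j → j ≤ q → p + 1 < i + j → b1 B i j = 0) ∧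
       (∀ j i, 1 ≤ j → j + 1 ≤ min p q → 2 ≤ i → i ≤ p + 1 - j →
         ∑ k ∈ Finset.Icc (i - 1) (p - j), b1 B k (j + 1) ≤
         ∑ k ∈ Finset.Icc i (p + 1 - j), b1 B k j)) :=
  P_eq_cano_iff_general p q mu B hmudec hmulen hsupp hcol

end KronRSK
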